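/- Let p be a prime with p ≡ 7 (mod 8). Then the sum of the quadratic residues of p lying in [1, (p−1)/2] equals (p−1)(p+1)/16, i.e. ΣR_b = (p²−1)/16. -/

import Mathlib

/-!
Let `n = (p - 1) / 2`. As `p ≡ 3 (mod 4)`, `-1` is a non-residue, so `x ↦ p - x` maps the
non-residues in `[1, n]` onto the residues in `[n + 1, p - 1]`. As `p ≡ 7 (mod 8)`, `2` is a
residue, so `x ↦ 2x mod p` permutes the residues; summing `2x mod p = 2x - p·[x > n]` over them
shows that their sum is `p` times the number of residues above `n`. Together these say that the
residues and the non-residues in `[1, n]` have the same sum, which is therefore half of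
`1 + ⋯ + n = n(n + 1)/2`, i.e. `(p² - 1)/16`.
-/

open Finset

theorem Int.exists_sq_modEq_iff_isSquare (m : ℕ) (y : ℤ) :
    (∃ x : ℤ, x ^ 2 ≡ y [ZMOD m]) ↔ IsSquare (y : ZMod m) := by
  simp_rw [← ZMod.intCast_eq_intCast_iff, Int.cast_pow, IsSquare, sq, eq_comm (a := (y : ZMod m))]
  exact (ZMod.intCast_surjective.exists (p := fun r : ZMod m => r * r = y)).symm

theorem isSquare_mul_iff_of_isSquare {G : Type*} [CommGroupWithZero G] {c : G} (hc0 : c ≠ 0)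
    (hc : IsSquare c) (x : G) : IsSquare (c * x) ↔ IsSquare x := by
  refine ⟨fun h => ?_, hc.mul⟩
  simpa [inv_mul_cancel_left₀ hc0] using hc.inv.mul h

theorem FiniteField.isSquare_neg_iff {F : Type*} [Field F] [Fintype F]
    (h : ¬IsSquare (-1 : F)) {x : F} (hx : x ≠ 0) : IsSquare (-x) ↔ ¬IsSquare x := by
  classical
  rw [← quadraticChar_neg_one_iff_not_isSquare] at h ⊢
  rw [← quadraticChar_one_iff_isSquare (neg_ne_zero.mpr hx), neg_eq_neg_one_mul, map_mul, h]
  constructor <;> intro <;> linarith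

theorem Finset.sum_filter_isSquare_mul_left {G M : Type*} [CommGroupWithZero G] [Fintype G]
    [DecidablePred (IsSquare : G → Prop)] [AddCommMonoid M] {c : G} (hc0 : c ≠ 0)
    (hc : IsSquare c) (f : G → M) :
    ∑ x : G with IsSquare x, f (c * x) = ∑ x : G with IsSquare x, f x :=
  sum_equiv (Equiv.mulLeft₀ c hc0) (by simp [isSquare_mul_iff_of_isSquare hc0 hc])
    fun _ _ => rfl

theorem Finset.two_mul_sum_Icc_one_id (m : ℕ) : 2 * ∑ y ∈ Icc 1 m, (y : ℤ) = m * (m + 1) := by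
  induction m with
  | zero => simp
  | succ m ih => rw [sum_Icc_succ_top (by omega), mul_add, ih]; push_cast; ring

namespace ZMod

theorem val_two_mul {n : ℕ} [NeZero n] (hn : Odd n) (x : ZMod n) :
    ((2 * x).val : ℤ) = 2 * x.val - if n / 2 < x.val then (n : ℤ) else 0 := by
  obtain ⟨k, rfl⟩ := hn
  have hx := x.val_lt
  rcases k.eq_zero_or_pos with rfl | hk
  · simp_all
  rw [val_mul, val_two_eq_two_mod, Nat.mod_eq_of_lt (show 2 < 2 * k + 1 by omega)]
  split_ifs with h
  · rw [Nat.mod_eq_sub_mod (by omega), Nat.mod_eq_of_lt (by omega),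
      Nat.cast_sub (by omega)]
    push_cast; ring
  · rw [Nat.mod_eq_of_lt (by omega)]; push_cast; ring

theorem sum_filter_val_le_eq_sum_Icc {n m : ℕ} [NeZero n] (hm : m < n) (P : ZMod n → Prop)
    [DecidablePred P] :
    ∑ x : ZMod n with P x ∧ x.val ≤ m, (x.val : ℤ) =
      ∑ y ∈ Icc 1 m with P ((y : ℕ) : ZMod n), (y : ℤ) := by
  refine sum_bij_ne_zero (fun x _ _ => x.val) ?_
    (fun _ _ _ _ _ _ h => val_injective n (Nat.cast_injective h)) ?_ fun _ _ _ => rfl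
  · intro x hx hx0
    simp only [mem_filter, mem_univ, true_and, mem_Icc, natCast_zmod_val] at hx ⊢
    exact ⟨⟨by omega, hx.2⟩, hx.1⟩
  · intro y hy _
    simp only [mem_filter, mem_Icc] at hy
    have hval : (y : ZMod n).val = y := val_cast_of_lt (by omega)
    exact ⟨y, by simp [hval, hy.1.2, hy.2], by rw [hval]; omega, hval⟩

variable {p : ℕ} [Fact p.Prime]

theorem sum_val_isSquare_eq_mul_card (hp2 : p ≠ 2) (h2 : IsSquare (2 : ZMod p)) :
    ∑ x : ZMod p with IsSquare x, (x.val : ℤ) =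
      p * #{x : ZMod p | IsSquare x ∧ p / 2 < x.val} := by
  have h20 : (2 : ZMod p) ≠ 0 := Ring.two_ne_zero (by rwa [ringChar_zmod_n])
  have hdouble : ∑ x : ZMod p with IsSquare x, ((2 * x).val : ℤ) =
      2 * ∑ x : ZMod p with IsSquare x, (x.val : ℤ) -
        p * #{x : ZMod p | IsSquare x ∧ p / 2 < x.val} := by
    rw [sum_congr rfl fun x _ => val_two_mul ((Fact.out : p.Prime).odd_of_ne_two hp2) x,
      sum_sub_distrib, ← mul_sum, ← sum_filter, sum_const, filter_filter, nsmul_eq_mul]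
    ring
  linarith [sum_filter_isSquare_mul_left h20 h2 fun x => (x.val : ℤ)]

theorem sum_isSquare_half_lt_val_eq_sum_not_isSquare_val_le_half {M : Type*}
    [AddCommMonoid M] (hp : p % 4 = 3) (f : ZMod p → M) :
    ∑ x : ZMod p with IsSquare x ∧ p / 2 < x.val, f x =
      ∑ x : ZMod p with ¬IsSquare x ∧ x.val ≤ p / 2, f (-x) := by
  refine (sum_equiv (Equiv.neg _) (fun x => ?_) fun _ _ => rfl).symm
  rcases eq_or_ne x 0 with rfl | hx
  · simp
  have hv := x.val_lt
  have hv0 : x.val ≠ 0 := (val_ne_zero x).mpr hx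
  simp only [mem_filter, mem_univ, true_and, Equiv.neg_apply, neg_val, if_neg hx,
    FiniteField.isSquare_neg_iff (by rw [exists_sq_eq_neg_one_iff]; omega) hx]
  exact and_congr_right fun _ => by omega

theorem sum_val_small_squares_eq_sum_val_small_nonsquares (hp : p % 8 = 7) :
    ∑ x : ZMod p with IsSquare x ∧ x.val ≤ p / 2, (x.val : ℤ) =
      ∑ x : ZMod p with ¬IsSquare x ∧ x.val ≤ p / 2, (x.val : ℤ) := by
  have hsplit := sum_filter_add_sum_filter_not {x : ZMod p | IsSquare x}
    (fun x => x.val ≤ p / 2) (fun x => (x.val : ℤ))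
  simp only [filter_filter, not_le] at hsplit
  have hdouble := sum_val_isSquare_eq_mul_card (by omega)
    ((exists_sq_eq_two_iff (by omega)).mpr (.inr hp))
  calc _ = ∑ x : ZMod p with IsSquare x ∧ p / 2 < x.val, ((p : ℤ) - x.val) := by
        rw [sum_sub_distrib, sum_const, nsmul_eq_mul]; linarith
    _ = ∑ x : ZMod p with ¬IsSquare x ∧ x.val ≤ p / 2, ((p : ℤ) - (-x).val) :=
        sum_isSquare_half_lt_val_eq_sum_not_isSquare_val_le_half (by omega) _
    _ = _ := sum_congr rfl fun x hx => by
        have hx0 : x ≠ 0 := by rintro rfl; simp at hx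
        rw [neg_val, if_neg hx0, Nat.cast_sub x.val_le]; ring

end ZMod

open scoped Classical in
/-- For a prime `p ≡ 7 (mod 8)`, the sum of the quadratic residues of `p`
in `[1, (p-1)/2]` equals `(p² - 1)/16`. -/
theorem sum_small_residues_eq_of_prime_mod_eight_eq_seven
    (p : ℕ) (hp : p.Prime) (hmod : p % 8 = 7) :
    ∑ y ∈ (Finset.Icc 1 ((p - 1) / 2)).filter
        (fun y => ∃ x : ℤ, x ^ 2 ≡ (y : ℤ) [ZMOD (p : ℤ)]), y =
      (p ^ 2 - 1) / 16 := by
  have := Fact.mk hp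
  -- the `do` block in the statement is the image of `Icc 1 ((p - 1) / 2)` under `ℕ → ℤ`
  simp only [bind_pure_comp, fmap_def, filter_image, sum_image Nat.cast_injective.injOn,
    Int.exists_sq_modEq_iff_isSquare, Int.cast_natCast, show (p - 1) / 2 = p / 2 by omega]
  have hlt : p / 2 < p := Nat.div_lt_self hp.pos one_lt_two
  have hsq := ZMod.sum_val_small_squares_eq_sum_val_small_nonsquares hmod
  rw [ZMod.sum_filter_val_le_eq_sum_Icc hlt, ZMod.sum_filter_val_le_eq_sum_Icc hlt] at hsq
  have htotal := sum_filter_add_sum_filter_not (Icc 1 (p / 2))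
    (fun y : ℕ => IsSquare (y : ZMod p)) (fun y => (y : ℤ))
  have hgauss := two_mul_sum_Icc_one_id (p / 2)
  have hp2 : (p : ℤ) ^ 2 - 1 =
      16 * ∑ y ∈ Icc 1 (p / 2) with IsSquare ((y : ℕ) : ZMod p), (y : ℤ) := by
    rw [show (p : ℤ) = 2 * (p / 2 : ℕ) + 1 by omega]
    linear_combination (-4) * hgauss - 8 * htotal - 8 * hsq
  rw [hp2, Int.mul_ediv_cancel_left _ (by norm_num)]
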